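/- arXiv:2309.09596 — 2 statements merged into one kernel-verified Lean document; each statement's English description precedes it below -/
import Mathlib

section
/- Let μ > 0, t₁ > 0, t₂ > 0 be real numbers and let a, b, ε₁, ε₂ be symmetric 2×2 real matrices. Define ω_first = μ(t₁ + t₂)/4, ω_second = μ[t₁(3t₂² + t₁²) + t₂(3t₁² + t₂²)]/12 = μ(t₁ + t₂)³/12, A = [t₁(I₂ + ε₁)² + t₂(I₂ + ε₂)²]/(t₁ + t₂), and B = 3t₁t₂(ε₂² + 2ε₂ − ε₁² − 2ε₁)/(t₁ + t₂)³. Then there exists a constant C ∈ ℝ, depending only on μ, t₁, t₂, ε₁, ε₂ (and not on a or b), such that ∫_{(t₂−t₁)/2}^{(t₁+t₂)/2} (μ/4)‖a − 2z·b − (I₂ + ε₁)²‖_F² dz + ∫_{−(t₁+t₂)/2}^{(t₂−t₁)/2} (μ/4)‖a − 2z·b − (I₂ + ε₂)²‖_F² dz = ω_first‖a − A‖_F² + ω_second‖b − B‖_F² + C. -/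
open Matrix MeasureTheory

noncomputable def frobSq (H : Matrix (Fin 2) (Fin 2) ℝ) : ℝ :=
  Matrix.trace (Hᵀ * H)

noncomputable def qf (X Y : Matrix (Fin 2) (Fin 2) ℝ) : ℝ := Matrix.trace (Xᵀ * Y)

lemma qf_symm (X Y : Matrix (Fin 2) (Fin 2) ℝ) : qf X Y = qf Y X := by
  unfold qf
  rw [← Matrix.trace_transpose (Xᵀ * Y), Matrix.transpose_mul, Matrix.transpose_transpose]

lemma frobSq_eq (X : Matrix (Fin 2) (Fin 2) ℝ) : frobSq X = qf X X := rfl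

lemma qf_sub_left (X Y Z : Matrix (Fin 2) (Fin 2) ℝ) : qf (X - Y) Z = qf X Z - qf Y Z := by
  unfold qf; rw [Matrix.transpose_sub, Matrix.sub_mul, Matrix.trace_sub]

lemma qf_sub_right (X Y Z : Matrix (Fin 2) (Fin 2) ℝ) : qf X (Y - Z) = qf X Y - qf X Z := by
  unfold qf; rw [Matrix.mul_sub, Matrix.trace_sub]

lemma qf_add_right (X Y Z : Matrix (Fin 2) (Fin 2) ℝ) : qf X (Y + Z) = qf X Y + qf X Z := by
  unfold qf; rw [Matrix.mul_add, Matrix.trace_add]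

lemma qf_smul_left (c : ℝ) (X Y : Matrix (Fin 2) (Fin 2) ℝ) : qf (c • X) Y = c * qf X Y := by
  unfold qf; rw [Matrix.transpose_smul, Matrix.smul_mul, Matrix.trace_smul]; rfl

lemma qf_smul_right (c : ℝ) (X Y : Matrix (Fin 2) (Fin 2) ℝ) : qf X (c • Y) = c * qf X Y := by
  unfold qf; rw [Matrix.mul_smul, Matrix.trace_smul]; rfl

lemma poly_integral (K s u c₀ c₁ c₂ : ℝ) :
    (∫ z in s..u, K * (c₀ + c₁ * z + c₂ * z ^ 2))
      = K * (c₀ * (u - s) + c₁ * (u ^ 2 - s ^ 2) / 2 + c₂ * (u ^ 3 - s ^ 3) / 3) := by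
  have h0 : IntervalIntegrable (fun _ : ℝ => c₀) volume s u :=
    continuous_const.intervalIntegrable _ _
  have h1 : IntervalIntegrable (fun z : ℝ => c₁ * z) volume s u :=
    (continuous_const.mul continuous_id).intervalIntegrable _ _
  have h2 : IntervalIntegrable (fun z : ℝ => c₂ * z ^ 2) volume s u :=
    (continuous_const.mul (continuous_pow 2)).intervalIntegrable _ _
  rw [intervalIntegral.integral_const_mul,
    intervalIntegral.integral_add (h0.add h1) h2,
    intervalIntegral.integral_add h0 h1,
    intervalIntegral.integral_const_mul, intervalIntegral.integral_const_mul,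
    intervalIntegral.integral_const, integral_id, integral_pow, smul_eq_mul]
  push_cast
  ring

/-- Completion-of-squares identity for the bilayer elastic energy with equal
second Lamé constant `μ`, layer thicknesses `t₁` (top) and `t₂` (bottom), and
linear growth strains `ε₁`, `ε₂`: there is a constant `C` (independent of the
fundamental forms `a` and `b`) such that the thickness-integrated strain energy
equals `ω_first‖a − A‖_F² + ω_second‖b − B‖_F² + C`. -/
theorem bilayer_energy_reduction_equal_mu
    (μ t₁ t₂ : ℝ) (hμ : 0 < μ) (ht₁ : 0 < t₁) (ht₂ : 0 < t₂)
    (ε₁ ε₂ : Matrix (Fin 2) (Fin 2) ℝ) (hε₁ : ε₁ᵀ = ε₁) (hε₂ : ε₂ᵀ = ε₂) :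
    ∃ C : ℝ, ∀ a b : Matrix (Fin 2) (Fin 2) ℝ, aᵀ = a → bᵀ = b →
      (∫ z in ((t₂ - t₁) / 2)..((t₁ + t₂) / 2),
          (μ / 4) * frobSq (a - (2 * z) • b - (1 + ε₁) ^ 2))
      + (∫ z in (-((t₁ + t₂) / 2))..((t₂ - t₁) / 2),
          (μ / 4) * frobSq (a - (2 * z) • b - (1 + ε₂) ^ 2))
      = (μ * (t₁ + t₂) / 4)
          * frobSq (a - (1 / (t₁ + t₂)) • (t₁ • (1 + ε₁) ^ 2 + t₂ • (1 + ε₂) ^ 2))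
        + (μ * (t₁ * (3 * t₂ ^ 2 + t₁ ^ 2) + t₂ * (3 * t₁ ^ 2 + t₂ ^ 2)) / 12)
          * frobSq (b - (3 * t₁ * t₂ / (t₁ + t₂) ^ 3)
              • (ε₂ ^ 2 + 2 • ε₂ - ε₁ ^ 2 - 2 • ε₁))
        + C := by
  set M₁ : Matrix (Fin 2) (Fin 2) ℝ := (1 + ε₁) ^ 2 with hM₁
  set M₂ : Matrix (Fin 2) (Fin 2) ℝ := (1 + ε₂) ^ 2 with hM₂
  have hN : ε₂ ^ 2 + 2 • ε₂ - ε₁ ^ 2 - 2 • ε₁ = M₂ - M₁ := by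
    rw [hM₁, hM₂, two_smul, two_smul]
    noncomm_ring
  set A : Matrix (Fin 2) (Fin 2) ℝ := (1 / (t₁ + t₂)) • (t₁ • M₁ + t₂ • M₂) with hA
  set B : Matrix (Fin 2) (Fin 2) ℝ := (3 * t₁ * t₂ / (t₁ + t₂) ^ 3) • (M₂ - M₁) with hB
  have htt : t₁ + t₂ ≠ 0 := by positivity
  refine ⟨(μ / 4) * (t₁ * qf M₁ M₁ + t₂ * qf M₂ M₂)
      - (μ * (t₁ + t₂) / 4) * qf A A
      - (μ * (t₁ * (3 * t₂ ^ 2 + t₁ ^ 2) + t₂ * (3 * t₁ ^ 2 + t₂ ^ 2)) / 12) * qf B B,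
    fun a b _ _ => ?_⟩
  have expand : ∀ (z : ℝ) (M : Matrix (Fin 2) (Fin 2) ℝ),
      (μ / 4) * frobSq (a - (2 * z) • b - M)
        = (μ / 4) * ((qf a a - 2 * qf a M + qf M M)
            + (-(4 * qf a b) + 4 * qf b M) * z + (4 * qf b b) * z ^ 2) := by
    intro z M
    simp only [frobSq_eq, qf_sub_left, qf_sub_right, qf_smul_left, qf_smul_right,
      qf_symm b a, qf_symm M a, qf_symm M b]
    ring
  rw [hN, ← hB]
  simp only [expand, poly_integral]
  simp only [frobSq_eq, qf_sub_left, qf_sub_right]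
  have haA : qf a A = (1 / (t₁ + t₂)) * (t₁ * qf a M₁ + t₂ * qf a M₂) := by
    rw [hA, qf_smul_right, qf_add_right, qf_smul_right, qf_smul_right]
  have hAa : qf A a = qf a A := qf_symm _ _
  have hbB : qf b B = (3 * t₁ * t₂ / (t₁ + t₂) ^ 3) * (qf b M₂ - qf b M₁) := by
    rw [hB, qf_smul_right, qf_sub_right]
  have hBb : qf B b = qf b B := qf_symm _ _
  rw [hAa, hBb, haA, hbB]
  field_simp
  ring
end

section
/- Let μ₁, μ₂, t₁, t₂ > 0 be real numbers and let a, b, ε₁, ε₂ be symmetric 2×2 real matrices. Define ω_first = (μ₁t₁ + μ₂t₂)/4, ω_second = [μ₁t₁(3t₂² + t₁²) + μ₂t₂(3t₁² + t₂²)]/12, A = [μ₁t₁(I₂ + ε₁)² + μ₂t₂(I₂ + ε₂)²]/(μ₁t₁ + μ₂t₂), and B = 3t₁t₂(μ₂ε₂² + 2μ₂ε₂ − μ₁ε₁² − 2μ₁ε₁)/[μ₁t₁(3t₂² + t₁²) + μ₂t₂(3t₁² + t₂²)]. Then there exists a constant C ∈ ℝ, depending only on μ₁, μ₂, t₁, t₂,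 ε₁, ε₂ (and not on a or b), such that ∫_{(t₂−t₁)/2}^{(t₁+t₂)/2} (μ₁/4)‖a − 2z·b − (I₂ + ε₁)²‖_F² dz + ∫_{−(t₁+t₂)/2}^{(t₂−t₁)/2} (μ₂/4)‖a − 2z·b − (I₂ + ε₂)²‖_F² dz = ω_first‖a − A‖_F² + ω_second‖b − B‖_F² + ((μ₂ − μ₁)t₁t₂/2)·tr((a − I₂)b) + C. In particular, when μ₁ = μ₂ the coupling term ((μ₂ − μ₁)t₁t₂/2)·tr((a − I₂)b) vanishes identically. -/
open Matrix

lemma trace_flip (X Y : Matrix (Fin 2) (Fin 2) ℝ) :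
    Matrix.trace (Xᵀ * Y) = Matrix.trace (Yᵀ * X) := by
  rw [← Matrix.trace_transpose (Xᵀ * Y), Matrix.transpose_mul, Matrix.transpose_transpose]

lemma frobSq_sub (X Y : Matrix (Fin 2) (Fin 2) ℝ) :
    frobSq (X - Y) = frobSq X - 2 * Matrix.trace (Xᵀ * Y) + frobSq Y := by
  unfold frobSq
  rw [Matrix.transpose_sub, Matrix.sub_mul, Matrix.mul_sub, Matrix.mul_sub,
    Matrix.trace_sub, Matrix.trace_sub, Matrix.trace_sub, trace_flip Y X]
  ring

lemma frobSq_smul (c : ℝ) (X : Matrix (Fin 2) (Fin 2) ℝ) :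
    frobSq (c • X) = c ^ 2 * frobSq X := by
  unfold frobSq
  rw [Matrix.transpose_smul, Matrix.smul_mul, Matrix.mul_smul, Matrix.trace_smul,
    Matrix.trace_smul, smul_eq_mul, smul_eq_mul]
  ring

lemma intpoly (c0 c1 c2 l u : ℝ) :
    (∫ z in l..u, (c0 + c1 * z + c2 * z ^ 2))
      = c0 * (u - l) + c1 * (u ^ 2 - l ^ 2) / 2 + c2 * (u ^ 3 - l ^ 3) / 3 := by
  have h1 : IntervalIntegrable (fun z : ℝ => c0 + c1 * z) MeasureTheory.volume l u :=
    (Continuous.intervalIntegrable (by continuity) _ _)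
  have h2 : IntervalIntegrable (fun z : ℝ => c2 * z ^ 2) MeasureTheory.volume l u :=
    (Continuous.intervalIntegrable (by continuity) _ _)
  have h3 : IntervalIntegrable (fun z : ℝ => (c0 : ℝ)) MeasureTheory.volume l u :=
    (Continuous.intervalIntegrable (by continuity) _ _)
  have h4 : IntervalIntegrable (fun z : ℝ => c1 * z) MeasureTheory.volume l u :=
    (Continuous.intervalIntegrable (by continuity) _ _)
  rw [intervalIntegral.integral_add h1 h2, intervalIntegral.integral_add h3 h4,
    intervalIntegral.integral_const, intervalIntegral.integral_const_mul,
    intervalIntegral.integral_const_mul, integral_id,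
    integral_pow, smul_eq_mul]
  push_cast
  ring

lemma key (μ l u : ℝ) (X B Y : Matrix (Fin 2) (Fin 2) ℝ) :
    (∫ z in l..u, (μ / 4) * frobSq (X - (2 * z) • B - Y))
      = (μ / 4) * frobSq (X - Y) * (u - l)
        - (μ / 2) * Matrix.trace ((X - Y)ᵀ * B) * (u ^ 2 - l ^ 2)
        + (μ / 3) * frobSq B * (u ^ 3 - l ^ 3) := by
  have h : ∀ z : ℝ, (μ / 4) * frobSq (X - (2 * z) • B - Y)
      = (μ / 4) * frobSq (X - Y)
        + (-(μ * Matrix.trace ((X - Y)ᵀ * B))) * z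
        + (μ * frobSq B) * z ^ 2 := by
    intro z
    rw [sub_right_comm, frobSq_sub (X - Y) ((2 * z) • B), frobSq_smul,
      Matrix.mul_smul, Matrix.trace_smul, smul_eq_mul]
    ring
  simp only [h]
  rw [intpoly]
  ring

set_option maxRecDepth 8000 in
/-- General bilayer elastic-energy reduction for two layers with possibly
different second Lamé constants `μ₁`, `μ₂`, thicknesses `t₁`, `t₂` and linear
growth strains `ε₁`, `ε₂`: there is a constant `C` (independent of the
fundamental forms `a`, `b`) such that the thickness-integrated strain energy
equals `ω_first‖a − A‖² + ω_second‖b − B‖² + ((μ₂ − μ₁)t₁t₂/2)·tr((a − I₂)b) + C`;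
and when `μ₁ = μ₂` the coupling term vanishes identically. -/
theorem bilayer_energy_reduction_general
    (μ₁ μ₂ t₁ t₂ : ℝ) (hμ₁ : 0 < μ₁) (hμ₂ : 0 < μ₂) (ht₁ : 0 < t₁) (ht₂ : 0 < t₂)
    (ε₁ ε₂ : Matrix (Fin 2) (Fin 2) ℝ) (hε₁ : ε₁ᵀ = ε₁) (hε₂ : ε₂ᵀ = ε₂) :
    (∃ C : ℝ, ∀ a b : Matrix (Fin 2) (Fin 2) ℝ, aᵀ = a → bᵀ = b →
      (∫ z in ((t₂ - t₁) / 2)..((t₁ + t₂) / 2),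
          (μ₁ / 4) * frobSq (a - (2 * z) • b - (1 + ε₁) ^ 2))
      + (∫ z in (-((t₁ + t₂) / 2))..((t₂ - t₁) / 2),
          (μ₂ / 4) * frobSq (a - (2 * z) • b - (1 + ε₂) ^ 2))
      = ((μ₁ * t₁ + μ₂ * t₂) / 4)
          * frobSq (a - (1 / (μ₁ * t₁ + μ₂ * t₂))
              • ((μ₁ * t₁) • (1 + ε₁) ^ 2 + (μ₂ * t₂) • (1 + ε₂) ^ 2))
        + ((μ₁ * t₁ * (3 * t₂ ^ 2 + t₁ ^ 2) + μ₂ * t₂ * (3 * t₁ ^ 2 + t₂ ^ 2)) / 12)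
          * frobSq (b - (3 * t₁ * t₂
              / (μ₁ * t₁ * (3 * t₂ ^ 2 + t₁ ^ 2) + μ₂ * t₂ * (3 * t₁ ^ 2 + t₂ ^ 2)))
              • (μ₂ • ε₂ ^ 2 + (2 * μ₂) • ε₂ - μ₁ • ε₁ ^ 2 - (2 * μ₁) • ε₁))
        + ((μ₂ - μ₁) * t₁ * t₂ / 2) * Matrix.trace ((a - 1) * b)
        + C)
    ∧ (μ₁ = μ₂ → ∀ a b : Matrix (Fin 2) (Fin 2) ℝ,
        ((μ₂ - μ₁) * t₁ * t₂ / 2) * Matrix.trace ((a - 1) * b) = 0) := by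
  have hD : μ₁ * t₁ + μ₂ * t₂ ≠ 0 := by positivity
  have hD2 : μ₁ * t₁ * (3 * t₂ ^ 2 + t₁ ^ 2) + μ₂ * t₂ * (3 * t₁ ^ 2 + t₂ ^ 2) ≠ 0 := by
    positivity
  constructor
  · refine ⟨(μ₁ * t₁ / 4) * frobSq ((1 + ε₁) ^ 2) + (μ₂ * t₂ / 4) * frobSq ((1 + ε₂) ^ 2)
      - ((μ₁ * t₁ + μ₂ * t₂) / 4)
          * frobSq ((1 / (μ₁ * t₁ + μ₂ * t₂))
              • ((μ₁ * t₁) • (1 + ε₁) ^ 2 + (μ₂ * t₂) • (1 + ε₂) ^ 2))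
      - ((μ₁ * t₁ * (3 * t₂ ^ 2 + t₁ ^ 2) + μ₂ * t₂ * (3 * t₁ ^ 2 + t₂ ^ 2)) / 12)
          * frobSq ((3 * t₁ * t₂
              / (μ₁ * t₁ * (3 * t₂ ^ 2 + t₁ ^ 2) + μ₂ * t₂ * (3 * t₁ ^ 2 + t₂ ^ 2)))
              • (μ₂ • ε₂ ^ 2 + (2 * μ₂) • ε₂ - μ₁ • ε₁ ^ 2 - (2 * μ₁) • ε₁)),
      fun a b ha hb => ?_⟩
    rw [key, key]
    simp only [frobSq_sub]
    simp only [pow_two, Matrix.transpose_sub, Matrix.transpose_add, Matrix.transpose_mul,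
      Matrix.transpose_smul, Matrix.transpose_one, ha, hb, hε₁, hε₂,
      Matrix.mul_add, Matrix.add_mul, Matrix.mul_sub, Matrix.sub_mul, Matrix.mul_one,
      Matrix.one_mul, Matrix.smul_mul, Matrix.mul_smul,
      Matrix.trace_add, Matrix.trace_sub, Matrix.trace_smul, smul_eq_mul]
    simp only [Matrix.trace_mul_comm ε₁ b, Matrix.trace_mul_comm ε₂ b,
      Matrix.trace_mul_comm (ε₁ * ε₁) b, Matrix.trace_mul_comm (ε₂ * ε₂) b]
    have hD2' : μ₁ * t₁ * (3 * (t₂ * t₂) + t₁ * t₁) + μ₂ * t₂ * (3 * (t₁ * t₁) + t₂ * t₂) ≠ 0 := by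
      positivity
    field_simp
    ring
  · intro h a b
    rw [h]
    ring
end
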